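/- arXiv:2311.02000 — 6 statements merged into one kernel-verified Lean document; each statement's English description precedes it below -/
import Mathlib

section
/- Let T ≥ 1 be an integer, (α_s)_{s=1}^T a real sequence, 0 < β_1 < β_2 ≤ 1 and ε > 0. Define ζ_s = Σ_{j=1}^s β_1^{s−j} α_j and θ_s = Σ_{j=1}^s β_2^{s−j} α_j². Then for every t ∈ [T]: Σ_{s=1}^t ζ_s²/(ε + θ_s) ≤ (1/((1−β_1)(1−β_1/β_2)))·( log(1 + θ_t/ε) − t·log β_2 ). -/
/-!
Cauchy–Schwarz against the weights `β₁^(s-j)` gives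
`ζ_s² ≤ (1-β₁)⁻¹ ∑_j β₁^(s-j) α_j²`. Since `ε + θ_s ≥ β₂^(s-j) (ε + θ_j)`, the term
`β₁^(s-j) α_j² / (ε + θ_s)` is at most `(β₁/β₂)^(s-j) α_j² / (ε + θ_j)`; exchanging the
sums and summing the geometric series in `β₁/β₂` leaves `∑_j α_j² / (ε + θ_j)`. By the
recursion `θ_j = β₂ θ_(j-1) + α_j²` and `a / (c + a) ≤ log (c + a) - log c`, each of
these terms is at most `log (ε + θ_j) - log (ε + θ_(j-1)) - log β₂`, and the sum
telescopes.
-/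

open Finset Real

lemma div_add_le_log_add_sub_log {a c : ℝ} (ha : 0 ≤ a) (hc : 0 < c) :
    a / (c + a) ≤ log (c + a) - log c := by
  have h := one_sub_inv_le_log_of_pos (show 0 < (c + a) / c by positivity)
  rw [log_div (by positivity) hc.ne', inv_div] at h
  calc a / (c + a) = 1 - c / (c + a) := by field_simp; ring
    _ ≤ _ := h

lemma sum_pow_le_inv_one_sub_of_injOn {ι : Type*} {s : Finset ι} {e : ι → ℕ}
    (he : Set.InjOn e s) {r : ℝ} (h0 : 0 ≤ r) (h1 : r < 1) :
    ∑ i ∈ s, r ^ e i ≤ (1 - r)⁻¹ := by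
  classical
  rw [← sum_image he, ← tsum_geometric_of_lt_one h0 h1]
  exact (summable_geometric_of_lt_one h0 h1).sum_le_tsum _ fun i _ => by positivity

lemma sum_Icc_pow_sub_mul_succ (β : ℝ) (f : ℕ → ℝ) (s : ℕ) :
    ∑ j ∈ Icc 1 (s + 1), β ^ (s + 1 - j) * f j =
      β * ∑ j ∈ Icc 1 s, β ^ (s - j) * f j + f (s + 1) := by
  rw [sum_Icc_succ_top (by omega), mul_sum, Nat.sub_self, pow_zero, one_mul]
  congr 1
  refine sum_congr rfl fun j hj => ?_
  rw [Nat.sub_add_comm (mem_Icc.1 hj).2, pow_succ]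
  ring

lemma pow_sub_mul_le_of_mul_le_succ {u : ℕ → ℝ} {β : ℝ} (hβ : 0 ≤ β)
    (hu : ∀ n, β * u n ≤ u (n + 1)) {j s : ℕ} (hjs : j ≤ s) :
    β ^ (s - j) * u j ≤ u s := by
  induction s, hjs using Nat.le_induction with
  | base => simp
  | succ n hjn ih =>
    rw [Nat.sub_add_comm hjn, pow_succ', mul_assoc]
    exact (mul_le_mul_of_nonneg_left ih hβ).trans (hu n)

lemma sq_sum_Icc_pow_sub_mul_le {β : ℝ} (h0 : 0 ≤ β) (h1 : β < 1) (a : ℕ → ℝ) (s : ℕ) :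
    (∑ j ∈ Icc 1 s, β ^ (s - j) * a j) ^ 2 ≤
      (1 - β)⁻¹ * ∑ j ∈ Icc 1 s, β ^ (s - j) * a j ^ 2 := by
  have hgeom : ∑ j ∈ Icc 1 s, β ^ (s - j) ≤ (1 - β)⁻¹ :=
    sum_pow_le_inv_one_sub_of_injOn
      (fun i hi j hj h => by simp only [coe_Icc, Set.mem_Icc] at hi hj h; omega) h0 h1
  refine (sum_sq_le_sum_mul_sum_of_sq_le_mul _ (f := fun j => β ^ (s - j))
    (g := fun j => β ^ (s - j) * a j ^ 2) (fun j _ => by positivity)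
    (fun j _ => by positivity) fun j _ => le_of_eq (by ring)).trans ?_
  exact mul_le_mul_of_nonneg_right hgeom (sum_nonneg fun j _ => by positivity)

lemma sq_sum_Icc_pow_sub_mul_div_le {β₁ β₂ : ℝ} (h₁ : 0 < β₁) (h₁' : β₁ < 1) (h₂ : 0 < β₂)
    {D : ℕ → ℝ} (hD : ∀ s, 0 < D s) (hdecay : ∀ {j s}, j ≤ s → β₂ ^ (s - j) * D j ≤ D s)
    (a : ℕ → ℝ) (s : ℕ) :
    (∑ j ∈ Icc 1 s, β₁ ^ (s - j) * a j) ^ 2 / D s ≤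
      (1 - β₁)⁻¹ * ∑ j ∈ Icc 1 s, (β₁ / β₂) ^ (s - j) * (a j ^ 2 / D j) := by
  refine (div_le_div_of_nonneg_right
    (sq_sum_Icc_pow_sub_mul_le h₁.le h₁' a s) (hD s).le).trans ?_
  rw [mul_div_assoc, sum_div]
  refine mul_le_mul_of_nonneg_left (sum_le_sum fun j hj => ?_) (inv_nonneg.2 (by linarith))
  rw [div_pow, div_mul_div_comm]
  exact div_le_div_of_nonneg_left (by positivity) (mul_pos (by positivity) (hD j))
    (hdecay (mem_Icc.1 hj).2)

lemma sum_Icc_sum_Icc_pow_sub_mul_le {r : ℝ} (h0 : 0 ≤ r) (h1 : r < 1) {b : ℕ → ℝ}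
    (hb : ∀ j, 0 ≤ b j) (t : ℕ) :
    ∑ s ∈ Icc 1 t, ∑ j ∈ Icc 1 s, r ^ (s - j) * b j ≤ (1 - r)⁻¹ * ∑ j ∈ Icc 1 t, b j := by
  rw [sum_comm' (t' := Icc 1 t) (s' := fun j => Icc j t)
      (fun s j => by simp only [mem_Icc]; omega), mul_sum]
  refine sum_le_sum fun j _ => ?_
  rw [← sum_mul]
  refine mul_le_mul_of_nonneg_right (sum_pow_le_inv_one_sub_of_injOn ?_ h0 h1) (hb j)
  intro s hs s' hs' h
  simp only [coe_Icc, Set.mem_Icc] at hs hs' h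
  omega

lemma sum_Icc_div_add_le_log {β ε : ℝ} (hβ0 : 0 < β) (hβ1 : β ≤ 1) (hε : 0 < ε)
    {v a : ℕ → ℝ} (hv : ∀ n, 0 ≤ v n) (ha : ∀ n, 0 ≤ a n)
    (hrec : ∀ n, v (n + 1) = β * v n + a (n + 1)) (t : ℕ) :
    ∑ j ∈ Icc 1 t, a j / (ε + v j) ≤ log (ε + v t) - log (ε + v 0) - t * log β := by
  induction t with
  | zero => simp
  | succ n ih =>
    have hv_n := hv n
    have hstep :
        a (n + 1) / (ε + v (n + 1)) ≤ log (ε + v (n + 1)) - log (ε + β * v n) := by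
      rw [hrec n, ← add_assoc]
      exact div_add_le_log_add_sub_log (ha _) (by positivity)
    have hlog : log β + log (ε + v n) ≤ log (ε + β * v n) := by
      rw [← log_mul hβ0.ne' (by positivity)]
      exact log_le_log (by positivity) (by nlinarith)
    rw [sum_Icc_succ_top (by omega)]
    push_cast
    linarith

theorem stmt4_general (T : ℕ) (α : ℕ → ℝ)
    (β1 β2 : ℝ) (hβ1pos : 0 < β1) (hβ12 : β1 < β2) (hβ2le : β2 ≤ 1)
    (ε : ℝ) (hε : 0 < ε)
    (ζ θ : ℕ → ℝ)
    (hζ : ∀ s, ζ s = ∑ j ∈ Finset.Icc 1 s, β1 ^ (s - j) * α j)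
    (hθ : ∀ s, θ s = ∑ j ∈ Finset.Icc 1 s, β2 ^ (s - j) * (α j) ^ 2) :
    ∀ t ∈ Finset.Icc 1 T,
      ∑ s ∈ Finset.Icc 1 t, (ζ s) ^ 2 / (ε + θ s) ≤
        1 / ((1 - β1) * (1 - β1 / β2)) *
          (Real.log (1 + θ t / ε) - t * Real.log β2) := by
  intro t _
  have hβ2 : 0 < β2 := hβ1pos.trans hβ12
  have hr : β1 / β2 < 1 := (div_lt_one hβ2).2 hβ12
  have hK₁ : 0 ≤ (1 - β1)⁻¹ := inv_nonneg.2 (by linarith)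
  have hK₂ : 0 ≤ (1 - β1 / β2)⁻¹ := inv_nonneg.2 (by linarith)
  have hθ_nonneg (s : ℕ) : 0 ≤ θ s := hθ s ▸ sum_nonneg fun j _ => by positivity
  have hθ_succ (s : ℕ) : θ (s + 1) = β2 * θ s + α (s + 1) ^ 2 := by
    rw [hθ, hθ, sum_Icc_pow_sub_mul_succ]
  have hden (s : ℕ) : 0 < ε + θ s := by linarith [hθ_nonneg s]
  have hdecay {j s : ℕ} (hjs : j ≤ s) : β2 ^ (s - j) * (ε + θ j) ≤ ε + θ s :=
    pow_sub_mul_le_of_mul_le_succ (u := fun n => ε + θ n) hβ2.le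
      (fun n => by rw [hθ_succ]; nlinarith [sq_nonneg (α (n + 1))]) hjs
  have hlog : log (1 + θ t / ε) = log (ε + θ t) - log (ε + θ 0) := by
    have hθ0 : θ 0 = 0 := by simp [hθ]
    rw [hθ0, add_zero, ← log_div (hden t).ne' hε.ne']
    congr 1
    field_simp
  calc ∑ s ∈ Icc 1 t, ζ s ^ 2 / (ε + θ s)
      ≤ (1 - β1)⁻¹ *
          ∑ s ∈ Icc 1 t, ∑ j ∈ Icc 1 s, (β1 / β2) ^ (s - j) * (α j ^ 2 / (ε + θ j)) := by
        rw [mul_sum]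
        exact sum_le_sum fun s _ =>
          hζ s ▸ sq_sum_Icc_pow_sub_mul_div_le hβ1pos (by linarith) hβ2 hden hdecay α s
    _ ≤ (1 - β1)⁻¹ * ((1 - β1 / β2)⁻¹ * ∑ j ∈ Icc 1 t, α j ^ 2 / (ε + θ j)) := by
        gcongr
        exact sum_Icc_sum_Icc_pow_sub_mul_le (by positivity) hr
          (fun j => div_nonneg (sq_nonneg _) (hden j).le) t
    _ ≤ (1 - β1)⁻¹ * ((1 - β1 / β2)⁻¹ * (log (1 + θ t / ε) - t * log β2)) := by
        rw [hlog]
        gcongr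
        exact sum_Icc_div_add_le_log hβ2 hβ2le hε hθ_nonneg (fun n => sq_nonneg (α n))
          hθ_succ t
    _ = _ := by rw [one_div, mul_inv, mul_assoc]

theorem stmt4 (T : ℕ) (hT : 1 ≤ T) (α : ℕ → ℝ)
    (β1 β2 : ℝ) (hβ1pos : 0 < β1) (hβ12 : β1 < β2) (hβ2le : β2 ≤ 1)
    (ε : ℝ) (hε : 0 < ε)
    (ζ θ : ℕ → ℝ)
    (hζ : ∀ s, ζ s = ∑ j ∈ Finset.Icc 1 s, β1 ^ (s - j) * α j)
    (hθ : ∀ s, θ s = ∑ j ∈ Finset.Icc 1 s, β2 ^ (s - j) * (α j) ^ 2) :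
    ∀ t ∈ Finset.Icc 1 T,
      ∑ s ∈ Finset.Icc 1 t, (ζ s) ^ 2 / (ε + θ s) ≤
        1 / ((1 - β1) * (1 - β1 / β2)) *
          (Real.log (1 + θ t / ε) - t * Real.log β2) :=
  stmt4_general T α β1 β2 hβ1pos hβ12 hβ2le ε hε ζ θ hζ hθ
end

section
/- Let T ≥ 1 be an integer, (α_s)_{s=1}^T a real sequence, 0 < β_1 < β_2 ≤ 1 and ε > 0. Define γ_s = (1/(1−β_1^s))·Σ_{j=1}^s β_1^{s−j} α_j and θ_s = Σ_{j=1}^s β_2^{s−j} α_j². Then for every t ∈ [T]: Σ_{s=1}^t γ_s²/(ε + θ_s) ≤ (1/((1−β_1)²(1−β_1/β_2)))·( log(1 + θ_t/ε) − t·log β_2 ). -/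
theorem stmt5 (T : ℕ) (hT : 1 ≤ T) (α : ℕ → ℝ)
    (β1 β2 : ℝ) (hβ1pos : 0 < β1) (hβ12 : β1 < β2) (hβ2le : β2 ≤ 1)
    (ε : ℝ) (hε : 0 < ε)
    (γ θ : ℕ → ℝ)
    (hγ : ∀ s, γ s = 1 / (1 - β1 ^ s) * ∑ j ∈ Finset.Icc 1 s, β1 ^ (s - j) * α j)
    (hθ : ∀ s, θ s = ∑ j ∈ Finset.Icc 1 s, β2 ^ (s - j) * (α j) ^ 2) :
    ∀ t ∈ Finset.Icc 1 T,
      ∑ s ∈ Finset.Icc 1 t, (γ s) ^ 2 / (ε + θ s) ≤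
        1 / ((1 - β1) ^ 2 * (1 - β1 / β2)) *
          (Real.log (1 + θ t / ε) - t * Real.log β2) := by
  have hβ1lt1 : β1 < 1 := lt_of_lt_of_le hβ12 hβ2le
  have hβ2pos : 0 < β2 := lt_trans hβ1pos hβ12
  have h1β1 : 0 < 1 - β1 := by linarith
  have hr1 : β1 / β2 < 1 := (div_lt_one hβ2pos).mpr hβ12
  have hrpos : 0 < β1 / β2 := div_pos hβ1pos hβ2pos
  have h1r : 0 < 1 - β1 / β2 := by linarith
  have hθ0 : ∀ s, 0 ≤ θ s := by
    intro s; rw [hθ]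
    apply Finset.sum_nonneg; intro j _; positivity
  have hεθ : ∀ s, 0 < ε + θ s := fun s => by have := hθ0 s; linarith
  -- Step A : Cauchy-Schwarz bound on γ
  have stepA : ∀ s, 1 ≤ s →
      (γ s) ^ 2 ≤ 1 / (1 - β1) ^ 2 * ∑ j ∈ Finset.Icc 1 s, β1 ^ (s - j) * (α j) ^ 2 := by
    intro s hs
    have hβ1s_le : β1 ^ s ≤ β1 := pow_le_of_le_one hβ1pos.le hβ1lt1.le (by omega)
    have h1s : 0 < 1 - β1 ^ s := by linarith
    have hB0 : (0:ℝ) ≤ ∑ j ∈ Finset.Icc 1 s, β1 ^ (s - j) * (α j) ^ 2 := by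
      apply Finset.sum_nonneg; intro j _; positivity
    have hCS : (∑ j ∈ Finset.Icc 1 s, β1 ^ (s - j) * α j) ^ 2 ≤
        (∑ j ∈ Finset.Icc 1 s, β1 ^ (s - j)) *
          ∑ j ∈ Finset.Icc 1 s, β1 ^ (s - j) * (α j) ^ 2 := by
      have h := Finset.sum_mul_sq_le_sq_mul_sq (Finset.Icc 1 s)
        (fun j => Real.sqrt (β1 ^ (s - j))) (fun j => Real.sqrt (β1 ^ (s - j)) * α j)
      have e1 : ∀ j ∈ Finset.Icc 1 s,
          Real.sqrt (β1 ^ (s - j)) * (Real.sqrt (β1 ^ (s - j)) * α j) = β1 ^ (s - j) * α j := by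
        intro j _
        rw [← mul_assoc, Real.mul_self_sqrt (by positivity)]
      have e2 : ∀ j ∈ Finset.Icc 1 s, Real.sqrt (β1 ^ (s - j)) ^ 2 = β1 ^ (s - j) := by
        intro j _; exact Real.sq_sqrt (by positivity)
      have e3 : ∀ j ∈ Finset.Icc 1 s,
          (Real.sqrt (β1 ^ (s - j)) * α j) ^ 2 = β1 ^ (s - j) * (α j) ^ 2 := by
        intro j _; rw [mul_pow, Real.sq_sqrt (by positivity)]
      rwa [Finset.sum_congr rfl e1, Finset.sum_congr rfl e2, Finset.sum_congr rfl e3] at h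
    have hA : (∑ j ∈ Finset.Icc 1 s, β1 ^ (s - j)) = (1 - β1 ^ s) / (1 - β1) := by
      rw [← Finset.Ico_add_one_right_eq_Icc, Finset.sum_Ico_eq_sum_range]
      have hst : s + 1 - 1 = s := by omega
      rw [hst]
      have h2 : ∀ i ∈ Finset.range s, β1 ^ (s - (1 + i)) = β1 ^ (s - 1 - i) := by
        intro i _; congr 1; omega
      rw [Finset.sum_congr rfl h2, Finset.sum_range_reflect (fun i => β1 ^ i) s,
        geom_sum_eq (by linarith : β1 ≠ 1)]
      rw [div_eq_div_iff (by linarith) (by linarith)]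
      ring
    calc (γ s) ^ 2 = (1 / (1 - β1 ^ s)) ^ 2 * (∑ j ∈ Finset.Icc 1 s, β1 ^ (s - j) * α j) ^ 2 := by
          rw [hγ]; ring
      _ ≤ (1 / (1 - β1 ^ s)) ^ 2 * ((∑ j ∈ Finset.Icc 1 s, β1 ^ (s - j)) *
            ∑ j ∈ Finset.Icc 1 s, β1 ^ (s - j) * (α j) ^ 2) := by
          apply mul_le_mul_of_nonneg_left hCS (by positivity)
      _ = 1 / ((1 - β1 ^ s) * (1 - β1)) * ∑ j ∈ Finset.Icc 1 s, β1 ^ (s - j) * (α j) ^ 2 := by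
          rw [hA]; field_simp
      _ ≤ 1 / (1 - β1) ^ 2 * ∑ j ∈ Finset.Icc 1 s, β1 ^ (s - j) * (α j) ^ 2 := by
          apply mul_le_mul_of_nonneg_right _ hB0
          apply one_div_le_one_div_of_le (by positivity)
          nlinarith
  -- monotonicity of ε + θ
  have hθmono : ∀ j s : ℕ, j ≤ s → β2 ^ (s - j) * (ε + θ j) ≤ ε + θ s := by
    intro j s hjs
    have h1 : β2 ^ (s - j) ≤ 1 := pow_le_one₀ hβ2pos.le hβ2le
    have hε1 : β2 ^ (s - j) * ε ≤ ε := by nlinarith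
    have hθ1 : β2 ^ (s - j) * θ j ≤ θ s := by
      rw [hθ j, hθ s, Finset.mul_sum]
      have he : ∀ i ∈ Finset.Icc 1 j,
          β2 ^ (s - j) * (β2 ^ (j - i) * (α i) ^ 2) = β2 ^ (s - i) * (α i) ^ 2 := by
        intro i hi
        rw [Finset.mem_Icc] at hi
        rw [← mul_assoc, ← pow_add]
        congr 2
        omega
      rw [Finset.sum_congr rfl he]
      apply Finset.sum_le_sum_of_subset_of_nonneg
      · exact Finset.Icc_subset_Icc_right hjs
      · intro i _ _; positivity
    calc β2 ^ (s - j) * (ε + θ j) = β2 ^ (s - j) * ε + β2 ^ (s - j) * θ j := by ring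
      _ ≤ ε + θ s := add_le_add hε1 hθ1
  -- per-term step B
  have hterm : ∀ s j : ℕ, j ≤ s →
      β1 ^ (s - j) * (α j) ^ 2 / (ε + θ s) ≤ (β1 / β2) ^ (s - j) * ((α j) ^ 2 / (ε + θ j)) := by
    intro s j hjs
    have hb : 0 < β2 ^ (s - j) * (ε + θ j) := by have := hεθ j; positivity
    have h1 : β1 ^ (s - j) * (α j) ^ 2 / (ε + θ s) ≤
        β1 ^ (s - j) * (α j) ^ 2 / (β2 ^ (s - j) * (ε + θ j)) := by
      apply div_le_div_of_nonneg_left (by positivity) hb (hθmono j s hjs)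
    calc β1 ^ (s - j) * (α j) ^ 2 / (ε + θ s)
        ≤ β1 ^ (s - j) * (α j) ^ 2 / (β2 ^ (s - j) * (ε + θ j)) := h1
      _ = (β1 / β2) ^ (s - j) * ((α j) ^ 2 / (ε + θ j)) := by
          rw [div_pow, div_mul_div_comm]
  -- geometric series
  have hgeom : ∀ j u : ℕ, ∑ s ∈ Finset.Icc j u, (β1 / β2) ^ (s - j) ≤ 1 / (1 - β1 / β2) := by
    intro j u
    rcases le_or_gt j u with h | h
    · rw [← Finset.Ico_add_one_right_eq_Icc, Finset.sum_Ico_eq_sum_range]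
      have he : ∀ i ∈ Finset.range (u + 1 - j), (β1 / β2) ^ (j + i - j) = (β1 / β2) ^ i := by
        intro i _; congr 1; omega
      rw [Finset.sum_congr rfl he, geom_sum_eq (ne_of_lt hr1)]
      have hconv : ((β1 / β2) ^ (u + 1 - j) - 1) / (β1 / β2 - 1)
          = (1 - (β1 / β2) ^ (u + 1 - j)) / (1 - β1 / β2) := by
        rw [div_eq_div_iff (sub_ne_zero.mpr (ne_of_lt hr1)) (ne_of_gt h1r)]
        ring
      rw [hconv, div_le_div_iff₀ h1r h1r]
      nlinarith [pow_nonneg hrpos.le (u + 1 - j)]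
    · rw [Finset.Icc_eq_empty (by omega)]
      simp only [Finset.sum_empty]
      positivity
  -- recurrence for θ
  have hrec : ∀ j, 1 ≤ j → θ j = (α j) ^ 2 + β2 * θ (j - 1) := by
    intro j hj
    obtain ⟨m, rfl⟩ : ∃ m, j = m + 1 := ⟨j - 1, by omega⟩
    rw [hθ, hθ]
    simp only [Nat.add_sub_cancel]
    rw [Finset.sum_Icc_succ_top (by omega : 1 ≤ m + 1), Finset.mul_sum,
      Nat.sub_self, pow_zero, one_mul, add_comm]
    congr 1
    apply Finset.sum_congr rfl
    intro i hi
    rw [Finset.mem_Icc] at hi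
    rw [← mul_assoc]
    congr 1
    rw [mul_comm, ← pow_succ]
    congr 1
    omega
  -- log bound
  have hlog : ∀ j, 1 ≤ j → (α j) ^ 2 / (ε + θ j) ≤
      Real.log (ε + θ j) - Real.log (ε + θ (j - 1)) - Real.log β2 := by
    intro j hj
    have ha : 0 < ε + θ j := hεθ j
    have hb : 0 < β2 * (ε + θ (j - 1)) := mul_pos hβ2pos (hεθ _)
    have key : Real.log (β2 * (ε + θ (j - 1)) / (ε + θ j)) ≤
        β2 * (ε + θ (j - 1)) / (ε + θ j) - 1 :=
      Real.log_le_sub_one_of_pos (div_pos hb ha)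
    rw [Real.log_div hb.ne' ha.ne', Real.log_mul hβ2pos.ne' (hεθ _).ne'] at key
    have hnum : (α j) ^ 2 ≤ (ε + θ j) - β2 * (ε + θ (j - 1)) := by
      rw [hrec j hj]; nlinarith
    have h2 : (α j) ^ 2 / (ε + θ j) ≤ ((ε + θ j) - β2 * (ε + θ (j - 1))) / (ε + θ j) :=
      (div_le_div_iff_of_pos_right ha).mpr hnum
    have h3 : ((ε + θ j) - β2 * (ε + θ (j - 1))) / (ε + θ j)
        = 1 - β2 * (ε + θ (j - 1)) / (ε + θ j) := by field_simp
    linarith [h2, key, h3.le, h3.ge]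
  -- telescoping sum of log bounds
  have hsum_log : ∀ u : ℕ, ∑ j ∈ Finset.Icc 1 u, ((α j) ^ 2 / (ε + θ j)) ≤
      Real.log (1 + θ u / ε) - u * Real.log β2 := by
    intro u
    have h1 : ∑ j ∈ Finset.Icc 1 u, ((α j) ^ 2 / (ε + θ j)) ≤
        ∑ j ∈ Finset.Icc 1 u,
          (Real.log (ε + θ j) - Real.log (ε + θ (j - 1)) - Real.log β2) :=
      Finset.sum_le_sum (fun j hj => hlog j (Finset.mem_Icc.mp hj).1)
    have h2 : ∑ j ∈ Finset.Icc 1 u,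
        (Real.log (ε + θ j) - Real.log (ε + θ (j - 1)) - Real.log β2)
        = Real.log (ε + θ u) - Real.log (ε + θ 0) - u * Real.log β2 := by
      rw [← Finset.Ico_add_one_right_eq_Icc, Finset.sum_Ico_eq_sum_range]
      have hu : u + 1 - 1 = u := by omega
      rw [hu]
      have he : ∀ i ∈ Finset.range u,
          (Real.log (ε + θ (1 + i)) - Real.log (ε + θ (1 + i - 1)) - Real.log β2)
          = ((fun k => Real.log (ε + θ k)) (i + 1) - (fun k => Real.log (ε + θ k)) i)
            - Real.log β2 := by
        intro i _
        have e1 : 1 + i = i + 1 := by omega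
        have e2 : 1 + i - 1 = i := by omega
        rw [e2, e1]
      rw [Finset.sum_congr rfl he, Finset.sum_sub_distrib,
        Finset.sum_range_sub (fun k => Real.log (ε + θ k)) u, Finset.sum_const,
        Finset.card_range, nsmul_eq_mul]
    have hθ00 : θ 0 = 0 := by rw [hθ]; simp
    have h4 : (1:ℝ) + θ u / ε = (ε + θ u) / ε := by field_simp
    rw [h4, Real.log_div (hεθ u).ne' hε.ne']
    rw [h2, hθ00] at h1
    simpa using h1
  -- main assembly
  intro t ht
  rw [Finset.mem_Icc] at ht
  have hC2 : (0:ℝ) ≤ 1 / (1 - β1) ^ 2 := by positivity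
  calc ∑ s ∈ Finset.Icc 1 t, (γ s) ^ 2 / (ε + θ s)
      ≤ ∑ s ∈ Finset.Icc 1 t,
          (1 / (1 - β1) ^ 2 * ∑ j ∈ Finset.Icc 1 s, β1 ^ (s - j) * (α j) ^ 2) / (ε + θ s) := by
        apply Finset.sum_le_sum
        intro s hs
        rw [Finset.mem_Icc] at hs
        exact (div_le_div_iff_of_pos_right (hεθ s)).mpr (stepA s hs.1)
    _ = 1 / (1 - β1) ^ 2 * ∑ s ∈ Finset.Icc 1 t,
          ∑ j ∈ Finset.Icc 1 s, β1 ^ (s - j) * (α j) ^ 2 / (ε + θ s) := by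
        rw [Finset.mul_sum]
        apply Finset.sum_congr rfl
        intro s _
        rw [mul_div_assoc, Finset.sum_div]
    _ ≤ 1 / (1 - β1) ^ 2 * ∑ s ∈ Finset.Icc 1 t,
          ∑ j ∈ Finset.Icc 1 s, (β1 / β2) ^ (s - j) * ((α j) ^ 2 / (ε + θ j)) := by
        apply mul_le_mul_of_nonneg_left _ hC2
        apply Finset.sum_le_sum
        intro s _
        apply Finset.sum_le_sum
        intro j hj
        rw [Finset.mem_Icc] at hj
        exact hterm s j hj.2
    _ = 1 / (1 - β1) ^ 2 * ∑ j ∈ Finset.Icc 1 t,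
          ∑ s ∈ Finset.Icc j t, (β1 / β2) ^ (s - j) * ((α j) ^ 2 / (ε + θ j)) := by
        congr 1
        apply Finset.sum_comm'
        intro s j
        simp only [Finset.mem_Icc]
        omega
    _ ≤ 1 / (1 - β1) ^ 2 * ∑ j ∈ Finset.Icc 1 t,
          1 / (1 - β1 / β2) * ((α j) ^ 2 / (ε + θ j)) := by
        apply mul_le_mul_of_nonneg_left _ hC2
        apply Finset.sum_le_sum
        intro j _
        rw [← Finset.sum_mul]
        apply mul_le_mul_of_nonneg_right (hgeom j t)
        have := hεθ j; positivity
    _ = 1 / ((1 - β1) ^ 2 * (1 - β1 / β2)) *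
          ∑ j ∈ Finset.Icc 1 t, ((α j) ^ 2 / (ε + θ j)) := by
        rw [← Finset.mul_sum, ← mul_assoc]
        congr 1
        field_simp
    _ ≤ 1 / ((1 - β1) ^ 2 * (1 - β1 / β2)) *
          (Real.log (1 + θ t / ε) - t * Real.log β2) := by
        apply mul_le_mul_of_nonneg_left (hsum_log t) (by positivity)
end

section
/- Let T ≥ 1 be an integer, (α_s)_{s=1}^T a nonnegative real sequence, β_2 ∈ (0,1] and ε > 0. Define θ_s = Σ_{j=1}^s β_2^{s−j} α_j. Then for every t ∈ [T]: Σ_{j=1}^t α_j/(ε + θ_j) ≤ log(1 + θ_t/ε) − t·log β_2. -/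
/-!
Writing `u n = ε + θ n`, the recursion `θ (n + 1) = β₂ θ n + α (n + 1)` and `β₂ ≤ 1` give
`β₂ u n + α (n + 1) ≤ u (n + 1)`. By `1 - 1/y ≤ log y` applied to `y = u (n + 1) / (β₂ u n)`,
each summand `α (n + 1) / u (n + 1)` is at most `log u (n + 1) - log u n - log β₂`, and the sum
telescopes to `log (u t / u 0) - t log β₂` with `u t / u 0 = 1 + θ t / ε`.
-/

open Finset Real

lemma div_le_log_sub_log {a c x : ℝ} (ha : 0 ≤ a) (hc : 0 < c) (hx : c + a ≤ x) :
    a / x ≤ log x - log c := by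
  have hx0 : 0 < x := by linarith
  calc a / x ≤ 1 - (x / c)⁻¹ := by
        rw [inv_div, le_sub_iff_add_le, ← add_div, div_le_one hx0]; linarith
    _ ≤ log (x / c) := one_sub_inv_le_log_of_pos (div_pos hx0 hc)
    _ = log x - log c := log_div hx0.ne' hc.ne'

lemma discounted_sum_succ {R : Type*} [CommSemiring R] (β : R) (α : ℕ → R) (n : ℕ) :
    ∑ j ∈ Icc 1 (n + 1), β ^ (n + 1 - j) * α j =
      β * ∑ j ∈ Icc 1 n, β ^ (n - j) * α j + α (n + 1) := by
  rw [sum_Icc_succ_top (Nat.le_add_left 1 n), Nat.sub_self, pow_zero, one_mul, mul_sum]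
  congr 1
  refine sum_congr rfl fun j hj => ?_
  rw [Nat.sub_add_comm (mem_Icc.mp hj).2, pow_succ']
  ring

lemma sum_div_le_log_div_sub_mul_log {α u : ℕ → ℝ} {β : ℝ} (hα : ∀ n, 0 ≤ α n) (hβ : 0 < β)
    (hu0 : 0 < u 0) (hu : ∀ n, β * u n + α (n + 1) ≤ u (n + 1)) (t : ℕ) :
    ∑ j ∈ Icc 1 t, α j / u j ≤ log (u t / u 0) - t * log β := by
  have hpos : ∀ n, 0 < u n := by
    intro n
    induction n with
    | zero => exact hu0
    | succ n ih => nlinarith [hu n, hα (n + 1)]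
  have hstep (n : ℕ) : α (n + 1) / u (n + 1) ≤ log (u (n + 1)) - log β - log (u n) := by
    rw [sub_sub, ← log_mul hβ.ne' (hpos n).ne']
    exact div_le_log_sub_log (hα _) (mul_pos hβ (hpos n)) (hu n)
  induction t with
  | zero => simp [div_self (hpos 0).ne']
  | succ n ih =>
    rw [sum_Icc_succ_top (Nat.le_add_left 1 n), log_div (hpos _).ne' hu0.ne']
    rw [log_div (hpos _).ne' hu0.ne'] at ih
    push_cast
    linarith [hstep n]

theorem stmt6_general (T : ℕ) (α : ℕ → ℝ) (hα : ∀ s, 0 ≤ α s)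
    (β2 : ℝ) (hβ2pos : 0 < β2) (hβ2le : β2 ≤ 1) (ε : ℝ) (hε : 0 < ε)
    (θ : ℕ → ℝ) (hθ : ∀ s, θ s = ∑ j ∈ Finset.Icc 1 s, β2 ^ (s - j) * α j) :
    ∀ t ∈ Finset.Icc 1 T,
      ∑ j ∈ Finset.Icc 1 t, α j / (ε + θ j) ≤
        Real.log (1 + θ t / ε) - t * Real.log β2 := by
  intro t _
  have hθ0 : θ 0 = 0 := by simp [hθ]
  have hrec (n : ℕ) : θ (n + 1) = β2 * θ n + α (n + 1) := by
    rw [hθ, hθ, discounted_sum_succ]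
  have hstep (n : ℕ) : β2 * (ε + θ n) + α (n + 1) ≤ ε + θ (n + 1) := by
    rw [hrec]
    linarith [mul_le_of_le_one_left hε.le hβ2le]
  have key := sum_div_le_log_div_sub_mul_log (u := fun n => ε + θ n) hα hβ2pos
    (by simpa [hθ0]) hstep t
  simpa only [hθ0, add_zero, add_div, div_self hε.ne'] using key

theorem stmt6 (T : ℕ) (hT : 1 ≤ T) (α : ℕ → ℝ) (hα : ∀ s, 0 ≤ α s)
    (β2 : ℝ) (hβ2pos : 0 < β2) (hβ2le : β2 ≤ 1) (ε : ℝ) (hε : 0 < ε)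
    (θ : ℕ → ℝ) (hθ : ∀ s, θ s = ∑ j ∈ Finset.Icc 1 s, β2 ^ (s - j) * α j) :
    ∀ t ∈ Finset.Icc 1 T,
      ∑ j ∈ Finset.Icc 1 t, α j / (ε + θ j) ≤
        Real.log (1 + θ t / ε) - t * Real.log β2 :=
  stmt6_general T α hα β2 hβ2pos hβ2le ε hε θ hθ
end

section
/- Let T ≥ 1 and d ≥ 1 be integers, 0 < β_1 < β_2 < 1, and let (g_s)_{s=1}^T be any sequence in ℝ^d. Define m_0 = v_0 = 0 and, for s ≥ 1 and i ∈ [d], m_{s,i} = β_1 m_{s−1,i} + (1−β_1) g_{s,i} and v_{s,i} = β_2 v_{s−1,i} + (1−β_2) g_{s,i}². Then for all s ∈ [T] and i ∈ [d]: |m_{s−1,i}| / √(v_{s−1,i}) ≤ √( (1−β_1)(1−β_1^{s−1}) / ((1−β_2)(1−β_1/β_2)) ), with the convention that the left-hand side is 0 when v_{s−1,i} = 0 (note v_{s−1,i} = 0 forces m_{s−1,i} = 0). -/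
private lemma stmt9_closed (β : ℝ) (c x : ℕ → ℝ) (hx0 : x 0 = 0)
    (hx : ∀ s, 1 ≤ s → x s = β * x (s - 1) + c s) :
    ∀ t, x t = ∑ k ∈ Finset.Icc 1 t, β ^ (t - k) * c k := by
  intro t
  induction t with
  | zero => simp [hx0]
  | succ n ih =>
    rw [hx (n+1) (by omega), Finset.sum_Icc_succ_top (by omega : 1 ≤ n+1)]
    simp only [Nat.add_sub_cancel, ih, Nat.sub_self, pow_zero, one_mul, Finset.mul_sum]
    congr 1
    refine Finset.sum_congr rfl fun k hk => ?_
    have hk' : k ≤ n := (Finset.mem_Icc.mp hk).2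
    have : n + 1 - k = (n - k) + 1 := by omega
    rw [this, pow_succ]
    ring

private lemma stmt9_reindex (β : ℝ) :
    ∀ t, ∑ k ∈ Finset.Icc 1 t, β ^ (t - k) = ∑ j ∈ Finset.range t, β ^ j := by
  intro t
  induction t with
  | zero => simp
  | succ n ih =>
    rw [Finset.sum_Icc_succ_top (by omega : 1 ≤ n+1), geom_sum_succ, Nat.sub_self, pow_zero]
    have : ∀ k ∈ Finset.Icc 1 n, β ^ (n + 1 - k) = β * β ^ (n - k) := by
      intro k hk
      have hk' : k ≤ n := (Finset.mem_Icc.mp hk).2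
      have : n + 1 - k = (n - k) + 1 := by omega
      rw [this, pow_succ]; ring
    rw [Finset.sum_congr rfl this, ← Finset.mul_sum, ih]

theorem stmt9 (T d : ℕ) (hT : 1 ≤ T) (hd : 1 ≤ d)
    (β1 β2 : ℝ) (hβ1pos : 0 < β1) (hβ12 : β1 < β2) (hβ2 : β2 < 1)
    (g m v : ℕ → Fin d → ℝ)
    (hm0 : ∀ i, m 0 i = 0) (hv0 : ∀ i, v 0 i = 0)
    (hm : ∀ s, 1 ≤ s → ∀ i, m s i = β1 * m (s - 1) i + (1 - β1) * g s i)
    (hv : ∀ s, 1 ≤ s → ∀ i, v s i = β2 * v (s - 1) i + (1 - β2) * (g s i) ^ 2) :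
    ∀ s ∈ Finset.Icc 1 T, ∀ i,
      |m (s - 1) i| / Real.sqrt (v (s - 1) i) ≤
        Real.sqrt ((1 - β1) * (1 - β1 ^ (s - 1)) / ((1 - β2) * (1 - β1 / β2))) := by
  intro s _ i
  set t := s - 1 with ht
  have hβ2pos : (0:ℝ) < β2 := lt_trans hβ1pos hβ12
  have hβ1lt1 : β1 < 1 := lt_trans hβ12 hβ2
  have hrat : β1 / β2 < 1 := (div_lt_one hβ2pos).mpr hβ12
  have hratpos : 0 < β1 / β2 := div_pos hβ1pos hβ2pos
  have hb1lt : β1 < β1 / β2 := by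
    rw [lt_div_iff₀ hβ2pos]
    exact mul_lt_of_lt_one_right hβ1pos hβ2
  -- closed forms
  have hmc : m t i = (1 - β1) * ∑ k ∈ Finset.Icc 1 t, β1 ^ (t - k) * g k i := by
    have := stmt9_closed β1 (fun s => (1 - β1) * g s i) (fun s => m s i) (hm0 i)
      (fun s hs => hm s hs i)
    rw [Finset.mul_sum]
    exact (this t).trans (Finset.sum_congr rfl fun k _ => by ring)
  have hvc : v t i = (1 - β2) * ∑ k ∈ Finset.Icc 1 t, β2 ^ (t - k) * (g k i) ^ 2 := by
    have := stmt9_closed β2 (fun s => (1 - β2) * (g s i) ^ 2) (fun s => v s i) (hv0 i)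
      (fun s hs => hv s hs i)
    rw [Finset.mul_sum]
    exact (this t).trans (Finset.sum_congr rfl fun k _ => by ring)
  set S2 : ℝ := ∑ k ∈ Finset.Icc 1 t, β2 ^ (t - k) * (g k i) ^ 2 with hS2
  have hS2nonneg : 0 ≤ S2 :=
    Finset.sum_nonneg fun k _ => mul_nonneg (pow_nonneg (le_of_lt hβ2pos) _) (sq_nonneg _)
  set C : ℝ := (1 - β1) * (1 - β1 ^ t) / ((1 - β2) * (1 - β1 / β2)) with hC
  have hCnonneg : 0 ≤ C := by
    apply div_nonneg
    · exact mul_nonneg (by linarith) (by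
        have : β1 ^ t ≤ 1 := pow_le_one₀ (le_of_lt hβ1pos) (le_of_lt hβ1lt1)
        linarith)
    · exact mul_nonneg (by linarith) (by linarith)
  -- key quadratic bound
  have hmain : (m t i) ^ 2 ≤ C * v t i := by
    -- Cauchy-Schwarz
    have hCS : (∑ k ∈ Finset.Icc 1 t, β1 ^ (t - k) * g k i) ^ 2 ≤
        (∑ k ∈ Finset.Icc 1 t, (β1 ^ 2 / β2) ^ (t - k)) * S2 := by
      have heq : ∀ k ∈ Finset.Icc 1 t,
          β1 ^ (t - k) * g k i =
            Real.sqrt ((β1 ^ 2 / β2) ^ (t - k)) * (Real.sqrt (β2 ^ (t - k)) * g k i) := by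
        intro k _
        rw [← mul_assoc, ← Real.sqrt_mul (pow_nonneg (by positivity) _)]
        have : (β1 ^ 2 / β2) ^ (t - k) * β2 ^ (t - k) = (β1 ^ (t - k)) ^ 2 := by
          rw [← mul_pow]
          field_simp
          ring
        rw [this, Real.sqrt_sq (pow_nonneg (le_of_lt hβ1pos) _)]
      rw [Finset.sum_congr rfl heq]
      have := Finset.sum_mul_sq_le_sq_mul_sq (Finset.Icc 1 t)
        (fun k => Real.sqrt ((β1 ^ 2 / β2) ^ (t - k)))
        (fun k => Real.sqrt (β2 ^ (t - k)) * g k i)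
      refine le_trans this (le_of_eq ?_)
      congr 1
      · exact Finset.sum_congr rfl fun k _ =>
          Real.sq_sqrt (pow_nonneg (by positivity) _)
      · exact Finset.sum_congr rfl fun k _ => by
          rw [mul_pow, Real.sq_sqrt (pow_nonneg (le_of_lt hβ2pos) _)]
    -- bound the geometric factor
    have hA : ∑ k ∈ Finset.Icc 1 t, (β1 ^ 2 / β2) ^ (t - k) ≤
        (1 - β1 ^ t) / (1 - β1 / β2) := by
      have h1 : ∑ k ∈ Finset.Icc 1 t, (β1 ^ 2 / β2) ^ (t - k) ≤
          ∑ k ∈ Finset.Icc 1 t, β1 ^ (t - k) := by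
        refine Finset.sum_le_sum fun k _ => pow_le_pow_left₀ (by positivity) ?_ _
        rw [div_le_iff₀ hβ2pos, pow_two]
        exact mul_le_mul_of_nonneg_left (le_of_lt hβ12) (le_of_lt hβ1pos)
      have h2 : ∑ k ∈ Finset.Icc 1 t, β1 ^ (t - k) = (1 - β1 ^ t) / (1 - β1) := by
        rw [stmt9_reindex β1 t, geom_sum_eq (ne_of_lt hβ1lt1) t]
        rw [div_eq_div_iff (by linarith) (by linarith)]
        ring
      have h3 : (1 - β1 ^ t) / (1 - β1) ≤ (1 - β1 ^ t) / (1 - β1 / β2) := by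
        apply div_le_div_of_nonneg_left
        · have : β1 ^ t ≤ 1 := pow_le_one₀ (le_of_lt hβ1pos) (le_of_lt hβ1lt1)
          linarith
        · linarith
        · linarith
      linarith
    rw [hmc, hvc, hC, mul_pow]
    have hS1sq : (∑ k ∈ Finset.Icc 1 t, β1 ^ (t - k) * g k i) ^ 2 ≤
        (1 - β1 ^ t) / (1 - β1 / β2) * S2 :=
      le_trans hCS (mul_le_mul_of_nonneg_right hA hS2nonneg)
    have h1b : (1 - β1) ^ 2 ≤ 1 - β1 := by nlinarith
    have hBnn : 0 ≤ (1 - β1 ^ t) / (1 - β1 / β2) * S2 := by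
      apply mul_nonneg _ hS2nonneg
      apply div_nonneg _ (by linarith)
      have : β1 ^ t ≤ 1 := pow_le_one₀ (le_of_lt hβ1pos) (le_of_lt hβ1lt1)
      linarith
    calc (1 - β1) ^ 2 * (∑ k ∈ Finset.Icc 1 t, β1 ^ (t - k) * g k i) ^ 2
        ≤ (1 - β1) ^ 2 * ((1 - β1 ^ t) / (1 - β1 / β2) * S2) :=
          mul_le_mul_of_nonneg_left hS1sq (sq_nonneg _)
      _ ≤ (1 - β1) * ((1 - β1 ^ t) / (1 - β1 / β2) * S2) :=
          mul_le_mul_of_nonneg_right h1b hBnn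
      _ = (1 - β1) * (1 - β1 ^ t) / ((1 - β2) * (1 - β1 / β2)) * ((1 - β2) * S2) := by
          have hne1 : (1:ℝ) - β2 ≠ 0 := by linarith
          have hne2 : (1:ℝ) - β1 / β2 ≠ 0 := by linarith
          have hne3 : β2 ≠ 0 := ne_of_gt hβ2pos
          have hne4 : β2 - β1 ≠ 0 := by linarith
          field_simp
  -- conclude
  rcases eq_or_lt_of_le (Real.sqrt_nonneg (v t i)) with h | h
  · rw [← h, div_zero]
    exact Real.sqrt_nonneg _
  · rw [div_le_iff₀ h]
    have : |m t i| ≤ Real.sqrt (C * v t i) := by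
      rw [← Real.sqrt_sq_eq_abs]
      exact Real.sqrt_le_sqrt hmain
    calc |m t i| ≤ Real.sqrt (C * v t i) := this
      _ = Real.sqrt C * Real.sqrt (v t i) := Real.sqrt_mul hCnonneg _
end

section
/- Fix 0 ≤ β_1 < β_2 < 1 and ε > 0. Let (x_s), (v_{s,i}), b_{s,i} be generated by the Adam recursion from arbitrary g_s ∈ ℝ^d, write ḡ_{s,i} := ∇f(x_s)_i, and assume the coordinate-wise affine variance noise condition. Define the proxy step-size a_{s,i} := √( β_2·v_{s−1,i} + (1−β_2)·(σ_{0,i}² + (1+σ_{1,i}²)·ḡ_{s,i}²) ) + ε_s. Then for every i ∈ [d] and every s ≥ 2: | 1/a_{s,i} − 1/b_{s−1,i} | ≤ (√(1−β_2) / (b_{s−1,i}·a_{s,i}))·max{ √( σ_{0,i}² + (1+σ_{1,i}²)·ḡ_{s,i}² ) + ε, √(v_{s−1,i}) + ε }. -/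
lemma sqrt_sub_le'' {a b : ℝ} (hb : 0 ≤ b) (hab : b ≤ a) :
    Real.sqrt a - Real.sqrt b ≤ Real.sqrt (a - b) := by
  nlinarith [Real.sq_sqrt hb, Real.sq_sqrt (hb.trans hab),
    Real.sq_sqrt (sub_nonneg.2 hab), Real.sqrt_nonneg a, Real.sqrt_nonneg b,
    Real.sqrt_nonneg (a - b),
    mul_nonneg (Real.sqrt_nonneg (a - b)) (Real.sqrt_nonneg b),
    sq_nonneg (Real.sqrt a - Real.sqrt b - Real.sqrt (a - b)),
    sq_nonneg (Real.sqrt a + Real.sqrt b + Real.sqrt (a - b))]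


set_option maxHeartbeats 1000000 in
lemma stmt17_core (β2 ε C V e0 e1 : ℝ)
    (hβ2pos : 0 < β2) (h1β2 : 0 ≤ 1 - β2) (hε : 0 < ε)
    (hCnn : 0 ≤ C) (hVnn : 0 ≤ V) (he0 : 0 < e0) (he1 : 0 < e1)
    (hD0 : e0 ≤ e1) (hD1 : e1 - e0 ≤ ε * Real.sqrt (1 - β2)) :
    |1 / (Real.sqrt (β2 * V + (1 - β2) * C) + e1) - 1 / (Real.sqrt V + e0)| ≤
      Real.sqrt (1 - β2) / ((Real.sqrt V + e0) * (Real.sqrt (β2 * V + (1 - β2) * C) + e1)) *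
        max (Real.sqrt C + ε) (Real.sqrt V + ε) := by
  set P : ℝ := β2 * V + (1 - β2) * C with hPdef
  have hPnn : 0 ≤ P := by positivity
  set SA := Real.sqrt P with hSA
  set SB := Real.sqrt V with hSB
  have hSAnn : 0 ≤ SA := Real.sqrt_nonneg _
  have hSBnn : 0 ≤ SB := Real.sqrt_nonneg _
  set A : ℝ := SA + e1 with hA
  set B : ℝ := SB + e0 with hB
  have hApos : 0 < A := by positivity
  have hBpos : 0 < B := by positivity
  set M : ℝ := max (Real.sqrt C + ε) (SB + ε) with hM
  have hM1 : Real.sqrt C + ε ≤ M := le_max_left _ _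
  have hM2 : SB + ε ≤ M := le_max_right _ _
  have hsqnn : 0 ≤ Real.sqrt (1 - β2) := Real.sqrt_nonneg _
  have hCs : 0 ≤ Real.sqrt C := Real.sqrt_nonneg _
  have hMnn : 0 ≤ M := le_trans (by positivity) hM1
  have hMs : 0 ≤ Real.sqrt (1 - β2) * M := mul_nonneg hsqnn hMnn
  have hMul1 : Real.sqrt (1 - β2) * (Real.sqrt C + ε) ≤ Real.sqrt (1 - β2) * M :=
    mul_le_mul_of_nonneg_left hM1 hsqnn
  have hMul2 : Real.sqrt (1 - β2) * (SB + ε) ≤ Real.sqrt (1 - β2) * M :=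
    mul_le_mul_of_nonneg_left hM2 hsqnn
  have key : |A - B| ≤ Real.sqrt (1 - β2) * M := by
    rw [abs_sub_le_iff]
    rcases le_or_gt V C with h | h
    · have hVP : V ≤ P := by nlinarith
      have h1 : SA - SB ≤ Real.sqrt (1 - β2) * Real.sqrt C := by
        calc SA - SB ≤ Real.sqrt (P - V) := sqrt_sub_le'' hVnn hVP
          _ ≤ Real.sqrt ((1 - β2) * C) := Real.sqrt_le_sqrt (by nlinarith)
          _ = Real.sqrt (1 - β2) * Real.sqrt C := Real.sqrt_mul h1β2 C
      have h2 : SB ≤ SA := Real.sqrt_le_sqrt hVP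
      constructor
      · have h3 : A - B = (SA - SB) + (e1 - e0) := by rw [hA, hB]; ring
        rw [h3]
        calc (SA - SB) + (e1 - e0) ≤
            Real.sqrt (1 - β2) * Real.sqrt C + ε * Real.sqrt (1 - β2) := by linarith
          _ = Real.sqrt (1 - β2) * (Real.sqrt C + ε) := by ring
          _ ≤ Real.sqrt (1 - β2) * M := hMul1
      · have h3 : B - A = (SB - SA) - (e1 - e0) := by rw [hA, hB]; ring
        rw [h3]; linarith
    · have hPV : P ≤ V := by nlinarith
      have h1 : SB - SA ≤ Real.sqrt (1 - β2) * SB := by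
        calc SB - SA ≤ Real.sqrt (V - P) := sqrt_sub_le'' hPnn hPV
          _ ≤ Real.sqrt ((1 - β2) * V) := Real.sqrt_le_sqrt (by nlinarith)
          _ = Real.sqrt (1 - β2) * Real.sqrt V := Real.sqrt_mul h1β2 V
      have h2 : SA ≤ SB := Real.sqrt_le_sqrt hPV
      constructor
      · have h3 : A - B = (SA - SB) + (e1 - e0) := by rw [hA, hB]; ring
        rw [h3]
        calc (SA - SB) + (e1 - e0) ≤ ε * Real.sqrt (1 - β2) := by linarith
          _ ≤ Real.sqrt (1 - β2) * (Real.sqrt C + ε) := by linarith [mul_nonneg hsqnn hCs, mul_comm ε (Real.sqrt (1 - β2))]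
          _ ≤ Real.sqrt (1 - β2) * M := hMul1
      · have h3 : B - A = (SB - SA) - (e1 - e0) := by rw [hA, hB]; ring
        rw [h3]
        calc (SB - SA) - (e1 - e0) ≤ Real.sqrt (1 - β2) * SB := by linarith
          _ ≤ Real.sqrt (1 - β2) * (SB + ε) := mul_le_mul_of_nonneg_left (by linarith) hsqnn
          _ ≤ Real.sqrt (1 - β2) * M := hMul2
  have heq : 1 / A - 1 / B = (B - A) / (A * B) := by field_simp
  rw [heq, abs_div, abs_of_pos (mul_pos hApos hBpos), abs_sub_comm]
  have hrhs : Real.sqrt (1 - β2) / (B * A) * M = (Real.sqrt (1 - β2) * M) / (A * B) := by ring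
  rw [hrhs]
  gcongr

theorem stmt17 (d : ℕ) (hd : 1 ≤ d)
    (β1 β2 η ε : ℝ)
    (hβ1 : 0 ≤ β1) (hβ12 : β1 < β2) (hβ2 : β2 < 1) (hε : 0 < ε)
    (f : EuclideanSpace ℝ (Fin d) → ℝ)
    (hdiff : Differentiable ℝ f)
    (σ0 σ1 : Fin d → ℝ) (hσ0 : ∀ i, 0 < σ0 i) (hσ1 : ∀ i, 0 < σ1 i)
    (g m v : ℕ → Fin d → ℝ) (x : ℕ → EuclideanSpace ℝ (Fin d))
    (ηs εs : ℕ → ℝ) (b a : ℕ → Fin d → ℝ)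
    (hm0 : ∀ i, m 0 i = 0) (hv0 : ∀ i, v 0 i = 0)
    (hm : ∀ s, 1 ≤ s → ∀ i, m s i = β1 * m (s - 1) i + (1 - β1) * g s i)
    (hv : ∀ s, 1 ≤ s → ∀ i, v s i = β2 * v (s - 1) i + (1 - β2) * (g s i) ^ 2)
    (hηs : ∀ s, 1 ≤ s → ηs s = η * Real.sqrt (1 - β2 ^ s) / (1 - β1 ^ s))
    (hεs : ∀ s, 1 ≤ s → εs s = ε * Real.sqrt (1 - β2 ^ s))
    (hx : ∀ s, 1 ≤ s → ∀ i,
      x (s + 1) i = x s i - ηs s * m s i / (Real.sqrt (v s i) + εs s))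
    (hb : ∀ s, 1 ≤ s → ∀ i, b s i = Real.sqrt (v s i) + εs s)
    (ha : ∀ s, 1 ≤ s → ∀ i, a s i =
      Real.sqrt (β2 * v (s - 1) i +
        (1 - β2) * ((σ0 i) ^ 2 + (1 + (σ1 i) ^ 2) * (gradient f (x s) i) ^ 2)) + εs s)
    (hnoise : ∀ s, 1 ≤ s → ∀ i,
      (g s i - gradient f (x s) i) ^ 2 ≤ (σ0 i) ^ 2 + (σ1 i) ^ 2 * (gradient f (x s) i) ^ 2) :
    ∀ s, 2 ≤ s → ∀ i : Fin d,
      |1 / a s i - 1 / b (s - 1) i| ≤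
        Real.sqrt (1 - β2) / (b (s - 1) i * a s i) *
          max (Real.sqrt ((σ0 i) ^ 2 + (1 + (σ1 i) ^ 2) * (gradient f (x s) i) ^ 2) + ε)
              (Real.sqrt (v (s - 1) i) + ε) := by
  intro s hs i
  obtain ⟨t, rfl⟩ : ∃ t, s = t + 1 := ⟨s - 1, by omega⟩
  have ht1 : 1 ≤ t := by omega
  have hβ2pos : 0 < β2 := lt_of_le_of_lt hβ1 hβ12
  have h1β2 : 0 ≤ 1 - β2 := by linarith
  have hvnn : ∀ n, 0 ≤ v n i := by
    intro n
    induction n with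
    | zero => simp [hv0]
    | succ k ih =>
      have h := hv (k + 1) (by omega) i
      simp only [Nat.add_sub_cancel] at h
      rw [h]
      nlinarith [sq_nonneg (g (k + 1) i)]
  simp only [Nat.add_sub_cancel]
  have hpowlt : ∀ n : ℕ, 1 ≤ n → β2 ^ n < 1 := fun n hn =>
    pow_lt_one₀ hβ2pos.le hβ2 (by omega)
  have hε0 : εs t = ε * Real.sqrt (1 - β2 ^ t) := hεs t ht1
  have hε1 : εs (t + 1) = ε * Real.sqrt (1 - β2 ^ (t + 1)) := hεs (t + 1) (by omega)
  have hε0pos : 0 < εs t := by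
    rw [hε0]
    have h : 0 < 1 - β2 ^ t := by linarith [hpowlt t ht1]
    positivity
  have hε1pos : 0 < εs (t + 1) := by
    rw [hε1]
    have h : 0 < 1 - β2 ^ (t + 1) := by linarith [hpowlt (t + 1) (by omega : 1 ≤ t + 1)]
    positivity
  have hpowle : β2 ^ (t + 1) ≤ β2 ^ t := by
    have h := pow_nonneg hβ2pos.le t
    calc β2 ^ (t + 1) = β2 ^ t * β2 := by ring
      _ ≤ β2 ^ t * 1 := by nlinarith
      _ = β2 ^ t := by ring
  have hD0 : εs t ≤ εs (t + 1) := by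
    rw [hε0, hε1]
    have h : Real.sqrt (1 - β2 ^ t) ≤ Real.sqrt (1 - β2 ^ (t + 1)) :=
      Real.sqrt_le_sqrt (by linarith)
    nlinarith
  have hD1 : εs (t + 1) - εs t ≤ ε * Real.sqrt (1 - β2) := by
    rw [hε0, hε1]
    have h1 : Real.sqrt (1 - β2 ^ (t + 1)) - Real.sqrt (1 - β2 ^ t) ≤
        Real.sqrt ((1 - β2 ^ (t + 1)) - (1 - β2 ^ t)) :=
      sqrt_sub_le'' (by linarith [hpowlt t ht1]) (by linarith)
    have h2 : ((1 - β2 ^ (t + 1)) - (1 - β2 ^ t)) ≤ 1 - β2 := by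
      have h := pow_nonneg hβ2pos.le t
      have hsplit : β2 ^ (t + 1) = β2 ^ t * β2 := pow_succ β2 t
      nlinarith [hsplit, (pow_le_one₀ hβ2pos.le hβ2.le : β2 ^ t ≤ 1)]
    have h3 : Real.sqrt ((1 - β2 ^ (t + 1)) - (1 - β2 ^ t)) ≤ Real.sqrt (1 - β2) :=
      Real.sqrt_le_sqrt h2
    nlinarith
  have hbB : b t i = Real.sqrt (v t i) + εs t := hb t ht1 i
  have haA : a (t + 1) i = Real.sqrt (β2 * v t i +
      (1 - β2) * ((σ0 i) ^ 2 + (1 + (σ1 i) ^ 2) * (gradient f (x (t + 1)) i) ^ 2)) +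
      εs (t + 1) := by
    have h := ha (t + 1) (by omega) i
    simpa only [Nat.add_sub_cancel] using h
  rw [hbB, haA]
  exact stmt17_core β2 ε _ (v t i) (εs t) (εs (t + 1)) hβ2pos h1β2 hε
    (by positivity) (hvnn t) hε0pos hε1pos hD0 hD1
end

section
/- Fix 0 ≤ β_1 < β_2 < 1, η > 0 and ε > 0. Let (v_{s,i}), b_{s,i} and η_s be generated by the Adam recursion from an arbitrary sequence g_s ∈ ℝ^d. Then for every i ∈ [d] and every s ≥ 2: η_s/η_{s−1} ≤ √(1+β_2), b_{s−1,i}/b_{s,i} ≤ 1/√β_2, and | η_s·b_{s−1,i}/(η_{s−1}·b_{s,i}) − 1 | ≤ max{ 1, √((1+β_2)/β_2) − 1 }. -/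
theorem stmt19 (d : ℕ) (hd : 1 ≤ d)
    (β1 β2 η ε : ℝ)
    (hβ1 : 0 ≤ β1) (hβ12 : β1 < β2) (hβ2 : β2 < 1) (hη : 0 < η) (hε : 0 < ε)
    (g v : ℕ → Fin d → ℝ) (ηs εs : ℕ → ℝ) (b : ℕ → Fin d → ℝ)
    (hv0 : ∀ i, v 0 i = 0)
    (hv : ∀ s, 1 ≤ s → ∀ i, v s i = β2 * v (s - 1) i + (1 - β2) * (g s i) ^ 2)
    (hηs : ∀ s, 1 ≤ s → ηs s = η * Real.sqrt (1 - β2 ^ s) / (1 - β1 ^ s))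
    (hεs : ∀ s, 1 ≤ s → εs s = ε * Real.sqrt (1 - β2 ^ s))
    (hb : ∀ s, 1 ≤ s → ∀ i, b s i = Real.sqrt (v s i) + εs s) :
    ∀ s, 2 ≤ s → ∀ i : Fin d,
      ηs s / ηs (s - 1) ≤ Real.sqrt (1 + β2) ∧
      b (s - 1) i / b s i ≤ 1 / Real.sqrt β2 ∧
      |ηs s * b (s - 1) i / (ηs (s - 1) * b s i) - 1| ≤
        max 1 (Real.sqrt ((1 + β2) / β2) - 1) := by
  have hβ2pos : 0 < β2 := lt_of_le_of_lt hβ1 hβ12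
  have hβ1lt1 : β1 < 1 := lt_trans hβ12 hβ2
  -- v is nonnegative
  have hvnn : ∀ s i, 0 ≤ v s i := by
    intro s
    induction s with
    | zero => intro i; rw [hv0]
    | succ n ih =>
      intro i
      rw [hv (n + 1) (by omega) i, show n + 1 - 1 = n from rfl]
      nlinarith [ih i, sq_nonneg (g (n + 1) i)]
  intro s hs i
  obtain ⟨t, rfl⟩ : ∃ t, s = t + 2 := ⟨s - 2, by omega⟩
  rw [show t + 2 - 1 = t + 1 from rfl]
  -- basic positivity facts
  have hA1 : 0 < 1 - β2 ^ (t + 1) := by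
    have := pow_lt_one₀ hβ2pos.le hβ2 (n := t + 1) (by omega); linarith
  have hA2 : 0 < 1 - β2 ^ (t + 2) := by
    have := pow_lt_one₀ hβ2pos.le hβ2 (n := t + 2) (by omega); linarith
  have hD1 : 0 < 1 - β1 ^ (t + 1) := by
    have := pow_lt_one₀ hβ1 hβ1lt1 (n := t + 1) (by omega); linarith
  have hD2 : 0 < 1 - β1 ^ (t + 2) := by
    have := pow_lt_one₀ hβ1 hβ1lt1 (n := t + 2) (by omega); linarith
  have hD12 : 1 - β1 ^ (t + 1) ≤ 1 - β1 ^ (t + 2) := by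
    have := pow_le_pow_of_le_one hβ1 hβ1lt1.le (show t + 1 ≤ t + 2 by omega); linarith
  have hβpow : β2 ^ (t + 1) ≤ β2 := by
    have := pow_le_pow_of_le_one hβ2pos.le hβ2.le (show 1 ≤ t + 1 by omega)
    simpa using this
  have hsβ2pos : 0 < Real.sqrt β2 := Real.sqrt_pos.mpr hβ2pos
  have hηs1pos : 0 < ηs (t + 1) := by
    rw [hηs (t + 1) (by omega)]
    exact div_pos (mul_pos hη (Real.sqrt_pos.mpr hA1)) hD1
  have hηs2pos : 0 < ηs (t + 2) := by
    rw [hηs (t + 2) (by omega)]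
    exact div_pos (mul_pos hη (Real.sqrt_pos.mpr hA2)) hD2
  have hεs1pos : 0 < εs (t + 1) := by
    rw [hεs (t + 1) (by omega)]; exact mul_pos hε (Real.sqrt_pos.mpr hA1)
  have hεs2pos : 0 < εs (t + 2) := by
    rw [hεs (t + 2) (by omega)]; exact mul_pos hε (Real.sqrt_pos.mpr hA2)
  have hb1pos : 0 < b (t + 1) i := by
    rw [hb (t + 1) (by omega) i]
    have := Real.sqrt_nonneg (v (t + 1) i); linarith
  have hb2pos : 0 < b (t + 2) i := by
    rw [hb (t + 2) (by omega) i]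
    have := Real.sqrt_nonneg (v (t + 2) i); linarith
  -- Part 1
  have key1 : ηs (t + 2) ≤ Real.sqrt (1 + β2) * ηs (t + 1) := by
    rw [hηs (t + 2) (by omega), hηs (t + 1) (by omega),
      show Real.sqrt (1 + β2) * (η * Real.sqrt (1 - β2 ^ (t + 1)) / (1 - β1 ^ (t + 1)))
        = η * (Real.sqrt (1 + β2) * Real.sqrt (1 - β2 ^ (t + 1))) / (1 - β1 ^ (t + 1)) from by
        ring,
      ← Real.sqrt_mul (by positivity)]
    apply div_le_div₀ (by positivity) ?_ hD1 hD12
    apply mul_le_mul_of_nonneg_left _ hη.le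
    apply Real.sqrt_le_sqrt
    nlinarith [pow_succ β2 (t + 1)]
  have part1 : ηs (t + 2) / ηs (t + 1) ≤ Real.sqrt (1 + β2) := by
    rw [div_le_iff₀ hηs1pos]; exact key1
  -- Part 2
  have h2a : Real.sqrt β2 * Real.sqrt (v (t + 1) i) ≤ Real.sqrt (v (t + 2) i) := by
    rw [← Real.sqrt_mul hβ2pos.le]
    apply Real.sqrt_le_sqrt
    have hvs := hv (t + 2) (by omega) i
    rw [show t + 2 - 1 = t + 1 from rfl] at hvs
    nlinarith [sq_nonneg (g (t + 2) i), hvnn (t + 1) i]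
  have h2b : Real.sqrt β2 * εs (t + 1) ≤ εs (t + 2) := by
    rw [hεs (t + 1) (by omega), hεs (t + 2) (by omega),
      show Real.sqrt β2 * (ε * Real.sqrt (1 - β2 ^ (t + 1)))
        = ε * (Real.sqrt β2 * Real.sqrt (1 - β2 ^ (t + 1))) from by ring,
      ← Real.sqrt_mul hβ2pos.le]
    apply mul_le_mul_of_nonneg_left _ hε.le
    apply Real.sqrt_le_sqrt
    nlinarith [pow_succ β2 (t + 1), pow_nonneg hβ2pos.le (t + 1)]
  have key2 : Real.sqrt β2 * b (t + 1) i ≤ b (t + 2) i := by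
    rw [hb (t + 1) (by omega) i, hb (t + 2) (by omega) i, mul_add]
    linarith
  have part2 : b (t + 1) i / b (t + 2) i ≤ 1 / Real.sqrt β2 := by
    rw [div_le_div_iff₀ hb2pos hsβ2pos, one_mul, mul_comm]
    exact key2
  -- Part 3
  refine ⟨part1, part2, ?_⟩
  have hRnn : 0 ≤ ηs (t + 2) * b (t + 1) i / (ηs (t + 1) * b (t + 2) i) :=
    div_nonneg (mul_nonneg hηs2pos.le hb1pos.le) (mul_nonneg hηs1pos.le hb2pos.le)
  have hRle : ηs (t + 2) * b (t + 1) i / (ηs (t + 1) * b (t + 2) i)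
      ≤ Real.sqrt ((1 + β2) / β2) := by
    rw [← div_mul_div_comm, Real.sqrt_div (by positivity)]
    calc ηs (t + 2) / ηs (t + 1) * (b (t + 1) i / b (t + 2) i)
        ≤ Real.sqrt (1 + β2) * (1 / Real.sqrt β2) :=
          mul_le_mul part1 part2 (div_nonneg hb1pos.le hb2pos.le) (Real.sqrt_nonneg _)
      _ = Real.sqrt (1 + β2) / Real.sqrt β2 := mul_one_div _ _
  rw [abs_le]
  constructor
  · have h1 : (1 : ℝ) ≤ max 1 (Real.sqrt ((1 + β2) / β2) - 1) := le_max_left _ _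
    linarith
  · have h1 : Real.sqrt ((1 + β2) / β2) - 1 ≤ max 1 (Real.sqrt ((1 + β2) / β2) - 1) :=
      le_max_right _ _
    linarith
end
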